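/- Fix y ≠ 0 and let g,h,k ∈ G_y be such that gh, hk and ghk also belong to G_y. Then the cocycle identity Ω_y(g,h) + Ω_y(gh,k) = Ω_y(h,k) + Ω_y(g,hk) holds; equivalently, the multiplication (r,g)·(s,h) = (r + s + Ω_y(g,h), gh) on ℝ × G_y is associative wherever all the products are defined. -/
import Mathlib


open Complex Matrix Real

noncomputable section

abbrev M2 : Type := Matrix (Fin 2) (Fin 2) ℂ

/-- `G_y`: matrices `!![a,b; −y·conj b, conj a]` with `|a|² + y|b|² = 1`, `a ≠ 0` and
`Arg a ∈ (−π/3, π/3)`. -/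
def Gset (y : ℝ) : Set M2 :=
  {m | (∃ a b : ℂ, m = !![a, b; -(y : ℂ) * (starRingEnd ℂ) b, (starRingEnd ℂ) a] ∧
      Complex.normSq a + y * Complex.normSq b = 1) ∧
    m 0 0 ≠ 0 ∧ Complex.arg (m 0 0) ∈ Set.Ioo (-(π / 3)) (π / 3)}

/-- `Ω_y(g,h) = (1/y)·Arg(a(gh)/(a(g)a(h)))`. -/
def Omega (y : ℝ) (g h : M2) : ℝ :=
  (1 / y) * Complex.arg ((g * h) 0 0 / (g 0 0 * h 0 0))

lemma arg_div_mul_of_small (z w u : ℂ) (hz0 : z ≠ 0) (hw0 : w ≠ 0) (hu0 : u ≠ 0)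
    (hz : Complex.arg z ∈ Set.Ioo (-(π / 3)) (π / 3))
    (hw : Complex.arg w ∈ Set.Ioo (-(π / 3)) (π / 3))
    (hu : Complex.arg u ∈ Set.Ioo (-(π / 3)) (π / 3)) :
    Complex.arg (z / (w * u)) = Complex.arg z - Complex.arg w - Complex.arg u := by
  have hpi := Real.pi_pos
  obtain ⟨hz1, hz2⟩ := hz
  obtain ⟨hw1, hw2⟩ := hw
  obtain ⟨hu1, hu2⟩ := hu
  have hwu0 : w * u ≠ 0 := mul_ne_zero hw0 hu0
  have hwu : Complex.arg (w * u) = Complex.arg w + Complex.arg u := by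
    rw [Complex.arg_mul_eq_add_arg_iff hw0 hu0]
    constructor <;> nlinarith
  have hne : Complex.arg (w * u) ≠ π := by
    rw [hwu]; nlinarith
  have hinv : Complex.arg (w * u)⁻¹ = -(Complex.arg w + Complex.arg u) := by
    rw [Complex.arg_inv, if_neg hne, hwu]
  have : Complex.arg (z * (w * u)⁻¹) = Complex.arg z + Complex.arg (w * u)⁻¹ := by
    rw [Complex.arg_mul_eq_add_arg_iff hz0 (inv_ne_zero hwu0), hinv]
    constructor <;> nlinarith
  rw [div_eq_mul_inv, this, hinv]; ring

/-- for `y ≠ 0` and `g,h,k ∈ G_y` with `gh, hk, ghk ∈ G_y`, the cocycle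
identity `Ω_y(g,h) + Ω_y(gh,k) = Ω_y(h,k) + Ω_y(g,hk)` holds, i.e. the multiplication
`(r,g)·(s,h) = (r+s+Ω_y(g,h), gh)` on `ℝ × G_y` is associative wherever defined. -/
theorem statement12 (y : ℝ) (hy : y ≠ 0) (g h k : M2)
    (hg : g ∈ Gset y) (hh : h ∈ Gset y) (hk : k ∈ Gset y)
    (hgh : g * h ∈ Gset y) (hhk : h * k ∈ Gset y) (hghk : g * h * k ∈ Gset y) :
    Omega y g h + Omega y (g * h) k = Omega y h k + Omega y g (h * k) := by
  obtain ⟨-, hg0, hga⟩ := hg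
  obtain ⟨-, hh0, hha⟩ := hh
  obtain ⟨-, hk0, hka⟩ := hk
  obtain ⟨-, hgh0, hgha⟩ := hgh
  obtain ⟨-, hhk0, hhka⟩ := hhk
  obtain ⟨-, hghk0, hghka⟩ := hghk
  have e1 := arg_div_mul_of_small ((g * h) 0 0) (g 0 0) (h 0 0) hgh0 hg0 hh0 hgha hga hha
  have e2 := arg_div_mul_of_small ((g * h * k) 0 0) ((g * h) 0 0) (k 0 0) hghk0 hgh0 hk0
    hghka hgha hka
  have e3 := arg_div_mul_of_small ((h * k) 0 0) (h 0 0) (k 0 0) hhk0 hh0 hk0 hhka hha hka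
  have e4 : Complex.arg ((g * (h * k)) 0 0 / (g 0 0 * (h * k) 0 0)) =
      Complex.arg ((g * h * k) 0 0) - Complex.arg (g 0 0) - Complex.arg ((h * k) 0 0) := by
    rw [← mul_assoc]
    exact arg_div_mul_of_small ((g * h * k) 0 0) (g 0 0) ((h * k) 0 0) hghk0 hg0 hhk0
      hghka hga hhka
  unfold Omega
  rw [e1, e2, e3, e4]
  ring
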